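/- Under the hypotheses of the previous approximate-isometry lemma, if additionally x·y ≥ γ for some 0 < γ ≤ 1 and ε = γ/8, then f(x)·f(y) ≥ γ/2; and if x·y ≤ −γ then f(x)·f(y) ≤ −γ/2. -/

import Mathlib

open scoped RealInnerProductSpace

section InnerDistortion

variable {E F : Type*} [NormedAddCommGroup E] [InnerProductSpace ℝ E]
  [NormedAddCommGroup F] [InnerProductSpace ℝ F]
  {x y : E} {u v : F} {ε : ℝ}

/- Both bounds come from polarization, `2⟪u, v⟫ = ‖u‖² + ‖v‖² - ‖u - v‖²`, applied on each side. -/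

theorem le_inner_of_sq_norm_sub_le (hx : ‖x‖ = 1) (hy : ‖y‖ = 1)
    (hu : 1 - ε ≤ ‖u‖ ^ 2) (hv : 1 - ε ≤ ‖v‖ ^ 2)
    (huv : ‖u - v‖ ^ 2 ≤ (1 + ε) * ‖x - y‖ ^ 2) :
    (1 + ε) * ⟪x, y⟫ - 2 * ε ≤ ⟪u, v⟫ := by
  rw [norm_sub_sq_real, norm_sub_sq_real, hx, hy] at *
  nlinarith

theorem inner_le_of_le_sq_norm_sub (hx : ‖x‖ = 1) (hy : ‖y‖ = 1)
    (hu : ‖u‖ ^ 2 ≤ 1 + ε) (hv : ‖v‖ ^ 2 ≤ 1 + ε)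
    (huv : (1 - ε) * ‖x - y‖ ^ 2 ≤ ‖u - v‖ ^ 2) :
    ⟪u, v⟫ ≤ (1 - ε) * ⟪x, y⟫ + 2 * ε := by
  rw [norm_sub_sq_real, norm_sub_sq_real, hx, hy] at *
  nlinarith

end InnerDistortion

/-- Margin preservation under approximate isometry: with `ε = γ/8`, a linear map that
approximately preserves the pairwise distances among `x`, `y`, `0` preserves the sign of
an inner product of magnitude at least `γ`, with margin at least `γ/2`. -/
theorem approx_isometry_margin_preservation
    {N k : ℕ} (x y : EuclideanSpace ℝ (Fin N))
    (hx : ‖x‖ = 1) (hy : ‖y‖ = 1)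
    (γ : ℝ) (hγ0 : 0 < γ) (hγ1 : γ ≤ 1)
    (f : EuclideanSpace ℝ (Fin N) →ₗ[ℝ] EuclideanSpace ℝ (Fin k))
    (hiso : ∀ z ∈ ({x, y, 0} : Set (EuclideanSpace ℝ (Fin N))),
      ∀ z' ∈ ({x, y, 0} : Set (EuclideanSpace ℝ (Fin N))),
        (1 - γ / 8) * ‖z - z'‖ ^ 2 ≤ ‖f z - f z'‖ ^ 2 ∧
        ‖f z - f z'‖ ^ 2 ≤ (1 + γ / 8) * ‖z - z'‖ ^ 2) :
    (γ ≤ ⟪x, y⟫ → γ / 2 ≤ ⟪f x, f y⟫) ∧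
    (⟪x, y⟫ ≤ -γ → ⟪f x, f y⟫ ≤ -(γ / 2)) := by
  obtain ⟨hfx_ge, hfx_le⟩ := hiso x (by simp) 0 (by simp)
  obtain ⟨hfy_ge, hfy_le⟩ := hiso y (by simp) 0 (by simp)
  obtain ⟨hfxy_ge, hfxy_le⟩ := hiso x (by simp) y (by simp)
  simp only [map_zero, sub_zero, hx, hy, one_pow, mul_one] at hfx_ge hfx_le hfy_ge hfy_le
  have h_lower := le_inner_of_sq_norm_sub_le hx hy hfx_ge hfy_ge hfxy_le
  have h_upper := inner_le_of_le_sq_norm_sub hx hy hfx_le hfy_le hfxy_ge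
  constructor <;> intro hxy <;> nlinarith
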